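/- arXiv:2309.11031 — 2 statements merged into one kernel-verified Lean document; each statement's English description precedes it below -/
import Mathlib

section
/- Let G be a simple graph on a vertex set V that is acyclic and locally finite, let d be a natural number, and suppose every vertex of G has degree at least d. Then for every nonempty finite set A ⊆ V of vertices, the number of edges of G with exactly one endpoint in A is at least d·|A| − 2(|A| − 1). -/
open Finset SimpleGraph Walk

lemma forest_edge_card {V : Type*} [Fintype V] [Nonempty V] (G : SimpleGraph V)
    [DecidableRel G.Adj] (h : G.IsAcyclic) :
    G.edgeFinset.card + 1 ≤ Fintype.card V := by
  classical
  set r : V → V := fun v => (G.connectedComponentMk v).out with hrdef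
  have hcomp : ∀ v, G.connectedComponentMk (r v) = G.connectedComponentMk v :=
    fun v => Quot.out_eq _
  have hreach : ∀ v, G.Reachable v (r v) := fun v =>
    (ConnectedComponent.exact (hcomp v)).symm
  have hroot : ∀ v, r (r v) = r v := fun v => congrArg Quot.out (hcomp v)
  have hradj : ∀ {x y}, G.Adj x y → r x = r y := fun hxy =>
    congrArg Quot.out (ConnectedComponent.sound hxy.reachable)
  have hex : ∀ v, ∃! p : G.Walk v (r v), p.IsPath := by
    intro v
    obtain ⟨w⟩ := hreach v
    exact ⟨w.toPath.1, w.toPath.2,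
      fun p hp => Subtype.ext_iff.mp (h.path_unique ⟨p, hp⟩ w.toPath)⟩
  choose f hf hf' using hex
  let g : V → Sym2 V := fun w =>
    if hn : (f w).Nil then s(w, w) else ((f w).firstDart hn).edge
  set T : Finset V := univ.filter (fun v => v ≠ r v) with hT
  have key : ∀ x y (hxy : G.Adj x y), (f x).length ≤ (f y).length →
      y ∈ T ∧ g y = s(x, y) := by
    intro x y hxy hlen
    have hrxy : r x = r y := hradj hxy
    have hyne : y ≠ r y := by
      intro hy
      have h0 : f y = Walk.nil.copy rfl hy := (hf' y _ (by simp)).symm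
      have h1 : f x = (Walk.cons hxy Walk.nil).copy rfl (hrxy.trans hy.symm).symm :=
        (hf' x _ (by simp [hxy.ne])).symm
      rw [h0, h1] at hlen
      simp at hlen
    have hnotmem : y ∉ (f x).support := by
      intro hy
      have htake : (f x).takeUntil y hy = Walk.cons hxy Walk.nil :=
        Subtype.ext_iff.mp (h.path_unique ⟨(f x).takeUntil y hy, (hf x).takeUntil hy⟩
          ⟨Walk.cons hxy Walk.nil, by simp [hxy.ne]⟩)
      have hdrop : f y = ((f x).dropUntil y hy).copy rfl hrxy :=
        (hf' y _ (by simp only [Walk.isPath_copy]; exact (hf x).dropUntil hy)).symm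
      have hspec := Walk.take_spec (f x) hy
      have hlenfx : (f x).length = 1 + (f y).length := by
        conv_lhs => rw [← hspec]
        rw [Walk.length_append, htake, hdrop]
        simp
      omega
    have hfy : f y = (Walk.cons hxy.symm (f x)).copy rfl hrxy :=
      (hf' y _ (by simp only [Walk.isPath_copy, Walk.cons_isPath_iff]; exact ⟨hf x, hnotmem⟩)).symm
    have hnil : ¬ (f y).Nil := not_nil_of_ne hyne
    refine ⟨by simp [hT, hyne], ?_⟩
    show (if hn : (f y).Nil then s(y, y) else ((f y).firstDart hn).edge) = s(x, y)
    rw [dif_neg hnil, Walk.edge_firstDart]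
    have : (f y).getVert 1 = x := by
      rw [hfy]
      simp
    rw [show (f y).snd = x from this, Sym2.eq_swap]
  have hsurj : Set.SurjOn g ↑T ↑G.edgeFinset := by
    intro e he
    induction e with
    | _ x y =>
      simp only [Finset.coe_sort_coe, Finset.mem_coe, mem_edgeFinset, SimpleGraph.mem_edgeSet] at he
      rcases le_total (f x).length (f y).length with hl | hl
      · obtain ⟨hT', hg⟩ := key x y he hl
        exact ⟨y, hT', hg⟩
      · obtain ⟨hT', hg⟩ := key y x he.symm hl
        exact ⟨x, hT', by rw [hg, Sym2.eq_swap]⟩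
  have hcard : G.edgeFinset.card ≤ T.card := Finset.card_le_card_of_surjOn g hsurj
  have hv0 : r (Classical.arbitrary V) ∉ T := by
    simp [hT, hroot]
  have : T.card < Fintype.card V := by
    rw [← Finset.card_univ]
    exact Finset.card_lt_card ⟨Finset.filter_subset _ _, fun hsub =>
      hv0 (hsub (Finset.mem_univ _))⟩
  omega

theorem stmt_2 {V : Type*} (G : SimpleGraph V) (hacyclic : G.IsAcyclic)
    [G.LocallyFinite] (d : ℕ) (hdeg : ∀ v : V, d ≤ G.degree v)
    (A : Finset V) (hA : A.Nonempty) :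
    (d * A.card : ℤ) - 2 * (A.card - 1) ≤
      ({p : V × V | p.1 ∈ A ∧ p.2 ∉ A ∧ G.Adj p.1 p.2}.ncard : ℤ) := by
  classical
  -- induced graph on the subtype
  let G' : SimpleGraph {x // x ∈ A} := G.comap (Subtype.val)
  letI : DecidableRel G'.Adj := fun a b => Classical.dec _
  have hG'acyclic : G'.IsAcyclic := by
    intro v c hc
    exact hacyclic _
      (hc.map (f := (Embedding.comap ⟨Subtype.val, Subtype.val_injective⟩ G).toHom)
        Subtype.val_injective)
  have hAne : Nonempty {x // x ∈ A} := ⟨⟨hA.choose, hA.choose_spec⟩⟩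
  have hforest := forest_edge_card G' hG'acyclic
  rw [Fintype.card_coe] at hforest
  -- degree in G' equals number of neighbors inside A
  have hdegG' : ∀ v : {x // x ∈ A}, G'.degree v = (A.filter (fun y => G.Adj ↑v y)).card := by
    intro v
    rw [SimpleGraph.degree, neighborFinset_eq_filter, Finset.univ_eq_attach]
    refine Finset.card_bij (fun y _ => ↑y) ?_ ?_ ?_
    · intro y hy
      simp only [Finset.mem_filter, Finset.mem_attach, true_and] at hy
      exact Finset.mem_filter.mpr ⟨y.2, hy⟩
    · intro a ha b hb hab
      exact Subtype.ext hab
    · intro y hy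
      simp only [Finset.mem_filter] at hy
      exact ⟨⟨y, hy.1⟩, Finset.mem_filter.mpr ⟨Finset.mem_attach _ _, hy.2⟩, rfl⟩
  have hsum : ∑ x ∈ A, (A.filter (fun y => G.Adj x y)).card = 2 * G'.edgeFinset.card := by
    rw [← SimpleGraph.sum_degrees_eq_twice_card_edges, Finset.univ_eq_attach]
    rw [← Finset.sum_attach A (fun x => (A.filter (fun y => G.Adj x y)).card)]
    exact Finset.sum_congr rfl (fun v _ => (hdegG' v).symm)
  -- the boundary as a finset
  set F : Finset (V × V) :=
    A.biUnion (fun x => (G.neighborFinset x \ A).image (fun y => (x, y))) with hF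
  have hsetF : {p : V × V | p.1 ∈ A ∧ p.2 ∉ A ∧ G.Adj p.1 p.2} = ↑F := by
    ext ⟨a, b⟩
    simp only [Set.mem_setOf_eq, hF, Finset.coe_biUnion, Set.mem_iUnion, Finset.mem_coe,
      Finset.mem_image, Finset.mem_sdiff, mem_neighborFinset, Prod.mk.injEq]
    constructor
    · rintro ⟨ha, hb, hadj⟩
      exact ⟨a, ha, b, ⟨hadj, hb⟩, rfl, rfl⟩
    · rintro ⟨x, hx, y, ⟨hadj, hy⟩, rfl, rfl⟩
      exact ⟨hx, hy, hadj⟩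
  have hFcard : F.card = ∑ x ∈ A, (G.neighborFinset x \ A).card := by
    rw [hF, Finset.card_biUnion]
    · exact Finset.sum_congr rfl (fun x _ =>
        Finset.card_image_of_injective _ (fun a b hab => by simpa using hab))
    · intro x hx y hy hxy
      simp only [Finset.disjoint_left, Finset.mem_image]
      rintro p ⟨a, _, rfl⟩ ⟨b, _, h⟩
      exact hxy (congrArg Prod.fst h).symm
  -- degree decomposition
  have hdegsplit : ∀ x ∈ A, G.degree x =
      (A.filter (fun y => G.Adj x y)).card + (G.neighborFinset x \ A).card := by
    intro x _
    have hfi : A.filter (fun y => G.Adj x y) = G.neighborFinset x ∩ A := by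
      ext y
      simp [mem_neighborFinset, and_comm]
    rw [hfi, SimpleGraph.degree, ← Finset.card_inter_add_card_sdiff (G.neighborFinset x) A]
  have hmain : d * A.card ≤ 2 * G'.edgeFinset.card + F.card := by
    calc d * A.card = ∑ _x ∈ A, d := by rw [Finset.sum_const, smul_eq_mul, mul_comm]
    _ ≤ ∑ x ∈ A, G.degree x := Finset.sum_le_sum (fun x _ => hdeg x)
    _ = ∑ x ∈ A, ((A.filter (fun y => G.Adj x y)).card + (G.neighborFinset x \ A).card) :=
        Finset.sum_congr rfl hdegsplit
    _ = 2 * G'.edgeFinset.card + F.card := by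
        rw [Finset.sum_add_distrib, hsum, hFcard]
  have hAcard : 1 ≤ A.card := Finset.card_pos.mpr hA
  rw [hsetF, Set.ncard_coe_finset]
  have h1 : (d * A.card : ℤ) ≤ 2 * G'.edgeFinset.card + F.card := by exact_mod_cast hmain
  have h2 : (G'.edgeFinset.card : ℤ) + 1 ≤ A.card := by exact_mod_cast hforest
  have h3 : (1 : ℤ) ≤ A.card := by exact_mod_cast hAcard
  linarith
end

section
/- Let D ≥ 0, a ≥ 0, λ > 0 be real numbers and i ≥ 1 a natural number. Then the condition 'ρ·λ·(D − a·(∑_{k=0}^{i-1} ρ^k)/ρ^i) ≤ 1 for all ρ ∈ (0,1)' holds if and only if λ·(D − a·i) ≤ 1. -/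
theorem stmt_6 (D a lam : ℝ) (hD : 0 ≤ D) (ha : 0 ≤ a) (hlam : 0 < lam)
    (i : ℕ) (hi : 1 ≤ i) :
    (∀ ρ ∈ Set.Ioo (0 : ℝ) 1,
        ρ * lam * (D - a * (∑ k ∈ Finset.range i, ρ ^ k) / ρ ^ i) ≤ 1) ↔
      lam * (D - a * i) ≤ 1 := by
  set G : ℝ → ℝ := fun ρ => ρ * lam * (D - a * (∑ k ∈ Finset.range i, ρ ^ k) / ρ ^ i)
    with hGdef
  have hG1 : G 1 = lam * (D - a * i) := by
    simp [hGdef]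
  constructor
  · intro h
    by_contra hlt
    push_neg at hlt
    have hc : ContinuousAt G 1 := by
      apply ContinuousAt.mul (continuousAt_id.mul continuousAt_const)
      apply ContinuousAt.sub continuousAt_const
      apply ContinuousAt.div
      · exact continuousAt_const.mul
          (continuous_finset_sum _ fun k _ => continuous_pow k).continuousAt
      · exact (continuous_pow i).continuousAt
      · simp
    have htend : Filter.Tendsto G (nhdsWithin 1 (Set.Iio 1)) (nhds (G 1)) :=
      hc.continuousWithinAt.tendsto
    have hev : ∀ᶠ ρ in nhdsWithin (1 : ℝ) (Set.Iio 1), 1 < G ρ := by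
      rw [hG1] at htend
      exact htend.eventually (eventually_gt_nhds hlt)
    have hmem : Set.Ioo (0 : ℝ) 1 ∈ nhdsWithin (1 : ℝ) (Set.Iio 1) :=
      Ioo_mem_nhdsLT_of_mem (by constructor <;> norm_num)
    obtain ⟨ρ, hρgt, hρmem⟩ := (hev.and (Filter.eventually_of_mem hmem fun x hx => hx)).exists
    exact absurd (h ρ hρmem) (not_le.mpr hρgt)
  · intro h ρ hρ
    obtain ⟨hρ0, hρ1⟩ := hρ
    have hpow : (0 : ℝ) < ρ ^ i := pow_pos hρ0 i
    have hS : (i : ℝ) ≤ ρ * (∑ k ∈ Finset.range i, ρ ^ k) / ρ ^ i := by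
      have hrw : ρ * (∑ k ∈ Finset.range i, ρ ^ k) / ρ ^ i
          = ∑ k ∈ Finset.range i, ρ ^ (k + 1) / ρ ^ i := by
        rw [Finset.mul_sum, Finset.sum_div]
        congr 1; funext k; rw [pow_succ]; ring
      rw [hrw]
      calc (i : ℝ) = ∑ _k ∈ Finset.range i, (1 : ℝ) := by simp
        _ ≤ ∑ k ∈ Finset.range i, ρ ^ (k + 1) / ρ ^ i := by
            apply Finset.sum_le_sum
            intro k hk
            rw [le_div_iff₀ hpow, one_mul]
            exact pow_le_pow_of_le_one hρ0.le hρ1.le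
              (by simpa using Finset.mem_range.mp hk)
    have hrw2 : G ρ = lam * (ρ * D - a * (ρ * (∑ k ∈ Finset.range i, ρ ^ k) / ρ ^ i)) := by
      simp only [hGdef]; ring
    have : G ρ ≤ lam * (D - a * i) := by
      rw [hrw2]
      apply mul_le_mul_of_nonneg_left _ hlam.le
      apply sub_le_sub
      · exact mul_le_of_le_one_left hD hρ1.le
      · exact mul_le_mul_of_nonneg_left hS ha
    exact this.trans h
end
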